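/- The quantum octonion algebra O_q is a simple (nonassociative) algebra: its only two-sided ideals are (0) and O_q. -/
import Mathlib


/-- Basis vector `x_k` of the 8-dimensional space. Index correspondence:
`0 ↦ x₁, 1 ↦ x₂, 2 ↦ x₃, 3 ↦ x₄, 4 ↦ x₋₄, 5 ↦ x₋₃, 6 ↦ x₋₂, 7 ↦ x₋₁`. -/
noncomputable def bx {K : Type*} [Field K] (k : Fin 8) : Fin 8 → K := Pi.single k 1

/-- Structure constants of the quantum octonion algebra (Table 3.9),
with `s = q^{1/2}`. -/
noncomputable def octTab {K : Type*} [Field K] (s : K) : Fin 8 → Fin 8 → Fin 8 → K :=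
  ![![0, 0, 0, s⁻¹^3 • bx 0, 0, s⁻¹^3 • bx 1, s⁻¹^3 • bx 2, s⁻¹^3 • bx 4],
    ![0, 0, (-s⁻¹) • bx 0, 0, (-s⁻¹) • bx 1, 0, s⁻¹^3 • bx 3, s⁻¹^3 • bx 5],
    ![0, s • bx 0, 0, 0, (-s⁻¹) • bx 2, (-s⁻¹) • bx 3, 0, s⁻¹^3 • bx 6],
    ![0, s • bx 1, s • bx 2, s • bx 3, 0, 0, 0, s⁻¹^3 • bx 7],
    ![(-s^3) • bx 0, 0, 0, 0, (-s⁻¹) • bx 4, (-s⁻¹) • bx 5, (-s⁻¹) • bx 6, 0],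
    ![(-s^3) • bx 1, 0, s • bx 4, s • bx 5, 0, 0, (-s⁻¹) • bx 7, 0],
    ![(-s^3) • bx 2, (-s^3) • bx 4, 0, s • bx 6, 0, s • bx 7, 0, 0],
    ![(-s^3) • bx 3, (-s^3) • bx 5, (-s^3) • bx 6, 0, (-s^3) • bx 7, 0, 0, 0]]

/-- The quantum octonion multiplication (Table 3.9), extended bilinearly. -/
noncomputable def octMul {K : Type*} [Field K] (s : K) (a b : Fin 8 → K) : Fin 8 → K :=
  ∑ i : Fin 8, ∑ j : Fin 8, (a i * b j) • octTab s i j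

@[local simp] lemma cvv_2_1 {α : Type*} (a : α) (u : Fin 1 → α) : Matrix.vecCons a u (1 : Fin 2) = u 0 := rfl
@[local simp] lemma cvv_3_1 {α : Type*} (a : α) (u : Fin 2 → α) : Matrix.vecCons a u (1 : Fin 3) = u 0 := rfl
@[local simp] lemma cvv_3_2 {α : Type*} (a : α) (u : Fin 2 → α) : Matrix.vecCons a u (2 : Fin 3) = u 1 := rfl
@[local simp] lemma cvv_4_1 {α : Type*} (a : α) (u : Fin 3 → α) : Matrix.vecCons a u (1 : Fin 4) = u 0 := rfl
@[local simp] lemma cvv_4_2 {α : Type*} (a : α) (u : Fin 3 → α) : Matrix.vecCons a u (2 : Fin 4) = u 1 := rfl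
@[local simp] lemma cvv_4_3 {α : Type*} (a : α) (u : Fin 3 → α) : Matrix.vecCons a u (3 : Fin 4) = u 2 := rfl
@[local simp] lemma cvv_5_1 {α : Type*} (a : α) (u : Fin 4 → α) : Matrix.vecCons a u (1 : Fin 5) = u 0 := rfl
@[local simp] lemma cvv_5_2 {α : Type*} (a : α) (u : Fin 4 → α) : Matrix.vecCons a u (2 : Fin 5) = u 1 := rfl
@[local simp] lemma cvv_5_3 {α : Type*} (a : α) (u : Fin 4 → α) : Matrix.vecCons a u (3 : Fin 5) = u 2 := rfl
@[local simp] lemma cvv_5_4 {α : Type*} (a : α) (u : Fin 4 → α) : Matrix.vecCons a u (4 : Fin 5) = u 3 := rfl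
@[local simp] lemma cvv_6_1 {α : Type*} (a : α) (u : Fin 5 → α) : Matrix.vecCons a u (1 : Fin 6) = u 0 := rfl
@[local simp] lemma cvv_6_2 {α : Type*} (a : α) (u : Fin 5 → α) : Matrix.vecCons a u (2 : Fin 6) = u 1 := rfl
@[local simp] lemma cvv_6_3 {α : Type*} (a : α) (u : Fin 5 → α) : Matrix.vecCons a u (3 : Fin 6) = u 2 := rfl
@[local simp] lemma cvv_6_4 {α : Type*} (a : α) (u : Fin 5 → α) : Matrix.vecCons a u (4 : Fin 6) = u 3 := rfl
@[local simp] lemma cvv_6_5 {α : Type*} (a : α) (u : Fin 5 → α) : Matrix.vecCons a u (5 : Fin 6) = u 4 := rfl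
@[local simp] lemma cvv_7_1 {α : Type*} (a : α) (u : Fin 6 → α) : Matrix.vecCons a u (1 : Fin 7) = u 0 := rfl
@[local simp] lemma cvv_7_2 {α : Type*} (a : α) (u : Fin 6 → α) : Matrix.vecCons a u (2 : Fin 7) = u 1 := rfl
@[local simp] lemma cvv_7_3 {α : Type*} (a : α) (u : Fin 6 → α) : Matrix.vecCons a u (3 : Fin 7) = u 2 := rfl
@[local simp] lemma cvv_7_4 {α : Type*} (a : α) (u : Fin 6 → α) : Matrix.vecCons a u (4 : Fin 7) = u 3 := rfl
@[local simp] lemma cvv_7_5 {α : Type*} (a : α) (u : Fin 6 → α) : Matrix.vecCons a u (5 : Fin 7) = u 4 := rfl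
@[local simp] lemma cvv_7_6 {α : Type*} (a : α) (u : Fin 6 → α) : Matrix.vecCons a u (6 : Fin 7) = u 5 := rfl
@[local simp] lemma cvv_8_1 {α : Type*} (a : α) (u : Fin 7 → α) : Matrix.vecCons a u (1 : Fin 8) = u 0 := rfl
@[local simp] lemma cvv_8_2 {α : Type*} (a : α) (u : Fin 7 → α) : Matrix.vecCons a u (2 : Fin 8) = u 1 := rfl
@[local simp] lemma cvv_8_3 {α : Type*} (a : α) (u : Fin 7 → α) : Matrix.vecCons a u (3 : Fin 8) = u 2 := rfl
@[local simp] lemma cvv_8_4 {α : Type*} (a : α) (u : Fin 7 → α) : Matrix.vecCons a u (4 : Fin 8) = u 3 := rfl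
@[local simp] lemma cvv_8_5 {α : Type*} (a : α) (u : Fin 7 → α) : Matrix.vecCons a u (5 : Fin 8) = u 4 := rfl
@[local simp] lemma cvv_8_6 {α : Type*} (a : α) (u : Fin 7 → α) : Matrix.vecCons a u (6 : Fin 8) = u 5 := rfl
@[local simp] lemma cvv_8_7 {α : Type*} (a : α) (u : Fin 7 → α) : Matrix.vecCons a u (7 : Fin 8) = u 6 := rfl

section Aux

variable {K : Type*} [Field K] (s : K)

lemma bx_apply (k m : Fin 8) : (bx k : Fin 8 → K) m = if m = k then 1 else 0 :=
  Pi.single_apply k 1 m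

lemma octMul_bxl (i : Fin 8) (x : Fin 8 → K) :
    octMul s (bx i) x = ∑ j : Fin 8, x j • octTab s i j := by
  rw [octMul, Finset.sum_eq_single i]
  · simp [bx]
  · intro b _ hb
    simp [bx, Pi.single_apply, hb]
  · simp

lemma octMul_bxr (j : Fin 8) (x : Fin 8 → K) :
    octMul s x (bx j) = ∑ i : Fin 8, x i • octTab s i j := by
  rw [octMul]
  congr 1; funext i
  rw [Finset.sum_eq_single j]
  · simp [bx]
  · intro b _ hb
    simp [bx, Pi.single_apply, hb]
  · simp

lemma octMul_bx_bx (i j : Fin 8) : octMul s (bx i) (bx j) = octTab s i j := by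
  rw [octMul_bxl, Finset.sum_eq_single j]
  · simp [bx]
  · intro b _ hb
    simp [bx, Pi.single_apply, hb]
  · simp

lemma compA1 (x : Fin 8 → K) :
    octMul s x (bx 3) = ![s⁻¹^3 * x 0, 0, 0, s * x 3, 0, s * x 5, s * x 6, 0] := by
  funext m; rw [octMul_bxr]
  fin_cases m <;> simp [Fin.sum_univ_eight, octTab, bx_apply, Matrix.vecHead, Matrix.vecTail] <;> ring

lemma compA2 (x : Fin 8 → K) :
    octMul s x (bx 4) =
      ![0, -(s⁻¹ * x 1), -(s⁻¹ * x 2), 0, -(s⁻¹ * x 4), 0, 0, -(s^3 * x 7)] := by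
  funext m; rw [octMul_bxr]
  fin_cases m <;> simp [Fin.sum_univ_eight, octTab, bx_apply, Matrix.vecHead, Matrix.vecTail] <;> ring

lemma compB1 (a b c d : K) :
    octMul s (bx 3) ![a, 0, 0, b, 0, c, d, 0] = (s * b) • bx 3 := by
  funext m; rw [octMul_bxl]
  fin_cases m <;> simp [Fin.sum_univ_eight, octTab, bx_apply, Matrix.vecHead, Matrix.vecTail] <;> ring

lemma compB2 (a b c d : K) :
    octMul s (bx 4) ![a, 0, 0, b, 0, c, d, 0] =
      ![-(s^3 * a), 0, 0, 0, 0, -(s⁻¹ * c), -(s⁻¹ * d), 0] := by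
  funext m; rw [octMul_bxl]
  fin_cases m <;> simp [Fin.sum_univ_eight, octTab, bx_apply, Matrix.vecHead, Matrix.vecTail] <;> ring

lemma compB3 (a b c d : K) :
    octMul s (bx 3) ![0, a, b, 0, c, 0, 0, d] =
      ![0, s * a, s * b, 0, 0, 0, 0, s⁻¹^3 * d] := by
  funext m; rw [octMul_bxl]
  fin_cases m <;> simp [Fin.sum_univ_eight, octTab, bx_apply, Matrix.vecHead, Matrix.vecTail] <;> ring

lemma compB4 (a b c d : K) :
    octMul s (bx 4) ![0, a, b, 0, c, 0, 0, d] = ![0, 0, 0, 0, -(s⁻¹ * c), 0, 0, 0] := by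
  funext m; rw [octMul_bxl]
  fin_cases m <;> simp [Fin.sum_univ_eight, octTab, bx_apply, Matrix.vecHead, Matrix.vecTail] <;> ring

lemma compR6 (a b c : K) :
    octMul s ![0, a, b, 0, 0, 0, 0, c] (bx 6) = (s⁻¹^3 * a) • bx 3 := by
  funext m; rw [octMul_bxr]
  fin_cases m <;> simp [Fin.sum_univ_eight, octTab, bx_apply, Matrix.vecHead, Matrix.vecTail] <;> ring

lemma compR5 (a b c : K) :
    octMul s ![0, a, b, 0, 0, 0, 0, c] (bx 5) = (-(s⁻¹) * b) • bx 3 := by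
  funext m; rw [octMul_bxr]
  fin_cases m <;> simp [Fin.sum_univ_eight, octTab, bx_apply, Matrix.vecHead, Matrix.vecTail] <;> ring

lemma compR0 (a b c : K) :
    octMul s ![0, a, b, 0, 0, 0, 0, c] (bx 0) = (-(s^3) * c) • bx 3 := by
  funext m; rw [octMul_bxr]
  fin_cases m <;> simp [Fin.sum_univ_eight, octTab, bx_apply, Matrix.vecHead, Matrix.vecTail] <;> ring

lemma compL7 (a b c : K) :
    octMul s (bx 7) ![a, 0, 0, 0, 0, b, c, 0] = (-(s^3) * a) • bx 3 := by
  funext m; rw [octMul_bxl]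
  fin_cases m <;> simp [Fin.sum_univ_eight, octTab, bx_apply, Matrix.vecHead, Matrix.vecTail] <;> ring

lemma compL2 (a b c : K) :
    octMul s (bx 2) ![a, 0, 0, 0, 0, b, c, 0] = (-(s⁻¹) * b) • bx 3 := by
  funext m; rw [octMul_bxl]
  fin_cases m <;> simp [Fin.sum_univ_eight, octTab, bx_apply, Matrix.vecHead, Matrix.vecTail] <;> ring

lemma compL1 (a b c : K) :
    octMul s (bx 1) ![a, 0, 0, 0, 0, b, c, 0] = (s⁻¹^3 * c) • bx 3 := by
  funext m; rw [octMul_bxl]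
  fin_cases m <;> simp [Fin.sum_univ_eight, octTab, bx_apply, Matrix.vecHead, Matrix.vecTail] <;> ring

lemma compW (a : K) :
    octMul s (bx 1) ![0, 0, 0, 0, a, 0, 0, 0] = ![0, -(s⁻¹ * a), 0, 0, 0, 0, 0, 0] := by
  funext m; rw [octMul_bxl]
  fin_cases m <;> simp [Fin.sum_univ_eight, octTab, bx_apply, Matrix.vecHead, Matrix.vecTail] <;> ring

lemma mem_of_smul_mem (I : Submodule K (Fin 8 → K)) {c : K} (hc : c ≠ 0)
    {v : Fin 8 → K} (h : c • v ∈ I) : v ∈ I := by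
  have h2 := I.smul_mem c⁻¹ h
  rwa [smul_smul, inv_mul_cancel₀ hc, one_smul] at h2

end Aux

/-- The quantum octonion algebra `O_q` is simple: every two-sided ideal
(a subspace closed under left and right multiplication) is `(0)` or all of `O_q`. -/
theorem quantum_octonion_simple
    {K : Type*} [Field K] (s : K) (hs : s ≠ 0)
    (I : Submodule K (Fin 8 → K))
    (hleft : ∀ a : Fin 8 → K, ∀ x ∈ I, octMul s a x ∈ I)
    (hright : ∀ a : Fin 8 → K, ∀ x ∈ I, octMul s x a ∈ I) :
    I = ⊥ ∨ I = ⊤ := by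
  by_cases hbot : I = ⊥
  · exact Or.inl hbot
  right
  obtain ⟨x, hxI, hx0⟩ := Submodule.exists_mem_ne_zero_of_ne_bot hbot
  obtain ⟨k, hk⟩ := Function.ne_iff.mp hx0
  simp only [Pi.zero_apply] at hk
  have hsi : s⁻¹ ≠ 0 := inv_ne_zero hs
  -- Step A : bx 3 ∈ I
  have hb3 : (bx 3 : Fin 8 → K) ∈ I := by
    have hR3 := hright (bx 3) x hxI
    have hR4 := hright (bx 4) x hxI
    rw [compA1] at hR3
    rw [compA2] at hR4
    fin_cases k
    · -- k = 0 : L7 (L4 (R3 x))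
      have h1 := hleft (bx 4) _ hR3
      rw [compB2] at h1
      have h2 := hleft (bx 7) _ h1
      rw [compL7] at h2
      exact mem_of_smul_mem I (by simp [hs]; exact hk) h2
    · -- k = 1 : R6 (L3 (R4 x))
      have h1 := hleft (bx 3) _ hR4
      rw [compB3] at h1
      have h2 := hright (bx 6) _ h1
      rw [compR6] at h2
      exact mem_of_smul_mem I (by simp [hs]; exact hk) h2
    · -- k = 2 : R5 (L3 (R4 x))
      have h1 := hleft (bx 3) _ hR4
      rw [compB3] at h1
      have h2 := hright (bx 5) _ h1
      rw [compR5] at h2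
      exact mem_of_smul_mem I (by simp [hs]; exact hk) h2
    · -- k = 3 : L3 (R3 x)
      have h1 := hleft (bx 3) _ hR3
      rw [compB1] at h1
      exact mem_of_smul_mem I (by simp [hs]; exact hk) h1
    · -- k = 4 : R6 (L1 (L4 (R4 x)))
      have h1 := hleft (bx 4) _ hR4
      rw [compB4] at h1
      have h2 := hleft (bx 1) _ h1
      rw [compW] at h2
      have h3 := hright (bx 6) _ h2
      rw [compR6] at h3
      exact mem_of_smul_mem I (by simp [hs]; exact hk) h3
    · -- k = 5 : L2 (L4 (R3 x))
      have h1 := hleft (bx 4) _ hR3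
      rw [compB2] at h1
      have h2 := hleft (bx 2) _ h1
      rw [compL2] at h2
      exact mem_of_smul_mem I (by simp [hs]; exact hk) h2
    · -- k = 6 : L1 (L4 (R3 x))
      have h1 := hleft (bx 4) _ hR3
      rw [compB2] at h1
      have h2 := hleft (bx 1) _ h1
      rw [compL1] at h2
      exact mem_of_smul_mem I (by simp [hs]; exact hk) h2
    · -- k = 7 : R0 (L3 (R4 x))
      have h1 := hleft (bx 3) _ hR4
      rw [compB3] at h1
      have h2 := hright (bx 0) _ h1
      rw [compR0] at h2
      exact mem_of_smul_mem I (by simp [hs]; exact hk) h2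
  -- Step B : all basis vectors are in I
  have hs3 : (s⁻¹^3 : K) ≠ 0 := pow_ne_zero 3 hsi
  have hb0 : (bx 0 : Fin 8 → K) ∈ I := by
    have h := hleft (bx 0) _ hb3
    rw [octMul_bx_bx] at h
    exact mem_of_smul_mem I hs3 (by simpa [octTab] using h)
  have hb1 : (bx 1 : Fin 8 → K) ∈ I := by
    have h := hright (bx 1) _ hb3
    rw [octMul_bx_bx] at h
    exact mem_of_smul_mem I hs (by simpa [octTab] using h)
  have hb2 : (bx 2 : Fin 8 → K) ∈ I := by
    have h := hright (bx 2) _ hb3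
    rw [octMul_bx_bx] at h
    exact mem_of_smul_mem I hs (by simpa [octTab] using h)
  have hb5 : (bx 5 : Fin 8 → K) ∈ I := by
    have h := hleft (bx 5) _ hb3
    rw [octMul_bx_bx] at h
    exact mem_of_smul_mem I hs (by simpa [octTab] using h)
  have hb6 : (bx 6 : Fin 8 → K) ∈ I := by
    have h := hleft (bx 6) _ hb3
    rw [octMul_bx_bx] at h
    exact mem_of_smul_mem I hs (by simpa [octTab] using h)
  have hb7 : (bx 7 : Fin 8 → K) ∈ I := by
    have h := hright (bx 7) _ hb3
    rw [octMul_bx_bx] at h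
    exact mem_of_smul_mem I hs3 (by simpa [octTab] using h)
  have hb4 : (bx 4 : Fin 8 → K) ∈ I := by
    have h := hright (bx 7) _ hb0
    rw [octMul_bx_bx] at h
    exact mem_of_smul_mem I hs3 (by simpa [octTab] using h)
  -- conclude
  rw [eq_top_iff]
  intro v _
  have hv : v = ∑ m : Fin 8, v m • (bx m : Fin 8 → K) := by
    funext n
    simp only [Finset.sum_apply, Pi.smul_apply, bx_apply, smul_eq_mul, Fin.sum_univ_eight]
    fin_cases n <;> simp
  rw [hv]
  refine Submodule.sum_mem I fun m _ => I.smul_mem _ ?_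
  fin_cases m
  exacts [hb0, hb1, hb2, hb3, hb4, hb5, hb6, hb7]
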